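/- arXiv:1803.02440 — 5 statements merged into one kernel-verified Lean document; each statement's English description precedes it below -/
import Mathlib

section
/- Let a, b > 0, λ ≥ 3 an integer, h : [0,a] → ℝ strictly increasing, strictly concave, continuous with h(0)=0, h(a)=b, and (x_k) a strictly decreasing sequence in (0,a). Set v_k = (x_k, h(x_k)), w₀ = (a,0), and w_k = (λ·w₀ + Σ_{j=1}^k v_j)/(k+λ). Then for every k ≥ 1, the point w_k lies strictly below the graph of h, i.e., the second coordinate of w_k is strictly less than h applied to the first coordinate of w_k. -/
/-- `v_k = (x_k, h(x_k))`. -/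
noncomputable def vseq (x : ℕ → ℝ) (h : ℝ → ℝ) (k : ℕ) : ℝ × ℝ := (x k, h (x k))

/-- `w_k = (λ·w₀ + Σ_{j=1}^k v_j)/(k+λ)` where `w₀ = (a,0)`; note `w_0 = (a,0)`. -/
noncomputable def wseq (a : ℝ) (lam : ℕ) (x : ℕ → ℝ) (h : ℝ → ℝ) (k : ℕ) : ℝ × ℝ :=
  ((k + lam : ℝ))⁻¹ • ((lam : ℝ) • ((a : ℝ), (0 : ℝ)) + ∑ j ∈ Finset.Icc 1 k, vseq x h j)

lemma wseq_fst (a : ℝ) (lam : ℕ) (x : ℕ → ℝ) (h : ℝ → ℝ) (k : ℕ) :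
    (wseq a lam x h k).1 = ((k + lam : ℝ))⁻¹ * ((lam : ℝ) * a + ∑ j ∈ Finset.Icc 1 k, x j) := by
  simp [wseq, vseq, Prod.fst_sum]; ring

lemma wseq_snd (a : ℝ) (lam : ℕ) (x : ℕ → ℝ) (h : ℝ → ℝ) (k : ℕ) :
    (wseq a lam x h k).2 = ((k + lam : ℝ))⁻¹ * (∑ j ∈ Finset.Icc 1 k, h (x j)) := by
  simp [wseq, vseq, Prod.snd_sum]

/-- each `w_k` (`k ≥ 1`) lies strictly below the graph of `h`. -/
theorem stmt_7 (a b : ℝ) (ha : 0 < a) (hb : 0 < b) (lam : ℕ) (hlam : 3 ≤ lam)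
    (h : ℝ → ℝ) (hmono : StrictMonoOn h (Set.Icc 0 a))
    (hconc : StrictConcaveOn ℝ (Set.Icc 0 a) h)
    (hcont : ContinuousOn h (Set.Icc 0 a)) (h0 : h 0 = 0) (hab : h a = b)
    (x : ℕ → ℝ) (hx : ∀ k, 1 ≤ k → x k ∈ Set.Ioo 0 a)
    (hanti : StrictAntiOn x (Set.Ici 1)) :
    ∀ k, 1 ≤ k → (wseq a lam x h k).2 < h ((wseq a lam x h k).1) := by
  have hlampos : (0 : ℝ) < lam := by positivity
  have key : ∀ k, (wseq a lam x h k).1 ∈ Set.Icc 0 a ∧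
      (wseq a lam x h k).2 < h ((wseq a lam x h k).1) := by
    intro k
    induction k with
    | zero =>
      have h1 : (wseq a lam x h 0).1 = a := by
        rw [wseq_fst]; simp; field_simp
      have h2 : (wseq a lam x h 0).2 = 0 := by
        rw [wseq_snd]; simp
      rw [h1, h2, hab]
      exact ⟨⟨le_of_lt ha, le_refl a⟩, hb⟩
    | succ k ih =>
      obtain ⟨ihmem, ihlt⟩ := ih
      set ck : ℝ := (k : ℝ) + lam with hck
      have hckpos : 0 < ck := by positivity
      have hck1 : ((k + 1 : ℕ) : ℝ) + lam = ck + 1 := by push_cast; ring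
      have hck1pos : (0 : ℝ) < ck + 1 := by positivity
      set t : ℝ := ck / (ck + 1) with ht
      set s : ℝ := 1 / (ck + 1) with hs
      have hts : t + s = 1 := by rw [ht, hs]; field_simp
      have htpos : 0 < t := by positivity
      have hspos : 0 < s := by positivity
      have hxk : x (k + 1) ∈ Set.Ioo 0 a := hx (k + 1) (by omega)
      have hsum : ∑ j ∈ Finset.Icc 1 (k + 1), x j
          = (∑ j ∈ Finset.Icc 1 k, x j) + x (k + 1) :=
        Finset.sum_Icc_succ_top (by omega) _
      have hsum2 : ∑ j ∈ Finset.Icc 1 (k + 1), h (x j)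
          = (∑ j ∈ Finset.Icc 1 k, h (x j)) + h (x (k + 1)) :=
        Finset.sum_Icc_succ_top (by omega) _
      have hf : (wseq a lam x h (k + 1)).1 = t * (wseq a lam x h k).1 + s * x (k + 1) := by
        rw [wseq_fst, wseq_fst, hsum, hck1, ht, hs]
        field_simp
        ring
      have hg : (wseq a lam x h (k + 1)).2 = t * (wseq a lam x h k).2 + s * h (x (k + 1)) := by
        rw [wseq_snd, wseq_snd, hsum2, hck1, ht, hs]
        field_simp
        ring
      have hxmem : x (k + 1) ∈ Set.Icc 0 a := ⟨le_of_lt hxk.1, le_of_lt hxk.2⟩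
      have hconv : t * (wseq a lam x h k).1 + s * x (k + 1) ∈ Set.Icc 0 a := by
        have := (convex_Icc (0 : ℝ) a) ihmem hxmem htpos.le hspos.le hts
        simpa [smul_eq_mul] using this
      constructor
      · rw [hf]; exact hconv
      · rw [hf, hg]
        have hcc : t • h ((wseq a lam x h k).1) + s • h (x (k + 1))
            ≤ h (t • (wseq a lam x h k).1 + s • x (k + 1)) :=
          hconc.concaveOn.2 ihmem hxmem htpos.le hspos.le hts
        simp only [smul_eq_mul] at hcc
        calc t * (wseq a lam x h k).2 + s * h (x (k + 1))
            < t * h ((wseq a lam x h k).1) + s * h (x (k + 1)) := by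
              have := mul_lt_mul_of_pos_left ihlt htpos
              linarith
          _ ≤ h (t * (wseq a lam x h k).1 + s * x (k + 1)) := hcc
  intro k _
  exact (key k).2
end

section
/- With the notation of the rotation-set construction, every point of V = {w_k : k ≥ 0} ∪ {w_∞} is an extreme point of R = conv(V), and w_∞ is the unique non-isolated point of V. -/
theorem extreme_of_strict_max {V : Set (ℝ × ℝ)} {p : ℝ × ℝ} (hp : p ∈ V)
    (f : (ℝ × ℝ) →ₗ[ℝ] ℝ) (hf : ∀ q ∈ V, q ≠ p → f q < f p) :
    p ∈ Set.extremePoints ℝ (convexHull ℝ V) := by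
  set U : Set (ℝ × ℝ) := {q | f q < f p} ∪ {p} with hU
  have hmemle : ∀ q ∈ U, f q ≤ f p := by
    rintro q (hq | hq)
    · exact le_of_lt hq
    · simp only [Set.mem_singleton_iff] at hq; rw [hq]
  have hmemlt : ∀ q ∈ U, q ≠ p → f q < f p := by
    rintro q (hq | hq) hqp
    · exact hq
    · simp only [Set.mem_singleton_iff] at hq; exact absurd hq hqp
  have hconv : Convex ℝ U := by
    intro u hu v hv s t hs ht hst
    have key : ∀ r : ℝ × ℝ, f r = f p → f (s • r + t • v) ≤ f p →
        True := fun _ _ _ => trivial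
    by_cases hup : u = p
    · by_cases hvp : v = p
      · rw [hup, hvp, ← add_smul, hst, one_smul]
        right; rfl
      · have hv' : f v < f p := hmemlt v hv hvp
        rcases eq_or_lt_of_le ht with rfl | ht'
        · have hs1 : s = 1 := by linarith
          rw [hs1, one_smul, zero_smul, add_zero, hup]
          right; rfl
        · left
          have hfc : f (s • u + t • v) = s * f u + t * f v := by
            simp [map_add, map_smul, smul_eq_mul]
          have h1 : s * f u ≤ s * f p := by
            have := hmemle u hu
            exact mul_le_mul_of_nonneg_left this hs
          have h2 : t * f v < t * f p := mul_lt_mul_of_pos_left hv' ht'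
          have h3 : s * f p + t * f p = f p := by rw [← add_mul, hst, one_mul]
          show f _ < f p
          rw [hfc]; linarith
    · have hu' : f u < f p := hmemlt u hu hup
      rcases eq_or_lt_of_le hs with rfl | hs'
      · have ht1 : t = 1 := by linarith
        rw [zero_smul, zero_add, ht1, one_smul]
        exact hv
      · left
        have hfc : f (s • u + t • v) = s * f u + t * f v := by
          simp [map_add, map_smul, smul_eq_mul]
        have h1 : s * f u < s * f p := mul_lt_mul_of_pos_left hu' hs'
        have h2 : t * f v ≤ t * f p := mul_le_mul_of_nonneg_left (hmemle v hv) ht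
        have h3 : s * f p + t * f p = f p := by rw [← add_mul, hst, one_mul]
        show f _ < f p
        rw [hfc]; linarith
  have hsub : convexHull ℝ V ⊆ U := by
    apply convexHull_min _ hconv
    intro q hq
    by_cases hqp : q = p
    · right; simp [hqp]
    · left; exact hf q hq hqp
  rw [mem_extremePoints]
  refine ⟨subset_convexHull ℝ V hp, ?_⟩
  intro x₁ hx₁ x₂ hx₂ hseg
  obtain ⟨s, t, hs, ht, hst, hpe⟩ := hseg
  have hfp : f p = s * f x₁ + t * f x₂ := by
    rw [← hpe]; simp [map_add, map_smul, smul_eq_mul]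
  have h3 : s * f p + t * f p = f p := by rw [← add_mul, hst, one_mul]
  constructor
  · by_contra hne
    have h1 : s * f x₁ < s * f p := mul_lt_mul_of_pos_left (hmemlt x₁ (hsub hx₁) hne) hs
    have h2 : t * f x₂ ≤ t * f p := mul_le_mul_of_nonneg_left (hmemle x₂ (hsub hx₂)) (le_of_lt ht)
    linarith
  · by_contra hne
    have h1 : t * f x₂ < t * f p := mul_lt_mul_of_pos_left (hmemlt x₂ (hsub hx₂) hne) ht
    have h2 : s * f x₁ ≤ s * f p := mul_le_mul_of_nonneg_left (hmemle x₁ (hsub hx₁)) (le_of_lt hs)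
    linarith

set_option maxHeartbeats 1000000 in
/-- every point of `V = {w_k : k ≥ 0} ∪ {w_∞}` is an extreme point of
`R = conv(V)`, and `w_∞ = (0,0)` is the unique non-isolated point of `V`. -/
theorem stmt_11 (a b : ℝ) (ha : 0 < a) (hb : 0 < b) (lam : ℕ) (hlam : 3 ≤ lam)
    (h : ℝ → ℝ) (hmono : StrictMonoOn h (Set.Icc 0 a))
    (hconc : StrictConcaveOn ℝ (Set.Icc 0 a) h)
    (hcont : ContinuousOn h (Set.Icc 0 a)) (h0 : h 0 = 0) (hab : h a = b)
    (θ C : ℝ) (hθ : θ ∈ Set.Ioo (0 : ℝ) 1) (hC : 0 < C)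
    (x : ℕ → ℝ) (hx : ∀ k, 1 ≤ k → x k ∈ Set.Ioo 0 a)
    (hanti : StrictAntiOn x (Set.Ici 1))
    (hnorm : ∀ k, 1 ≤ k → Real.sqrt ((x k) ^ 2 + (h (x k)) ^ 2) < C * θ ^ k) :
    (Set.range (wseq a lam x h) ∪ {((0 : ℝ), (0 : ℝ))}) ⊆
      Set.extremePoints ℝ (convexHull ℝ (Set.range (wseq a lam x h) ∪ {((0 : ℝ), (0 : ℝ))})) ∧
    ((0 : ℝ), (0 : ℝ)) ∈
      closure ((Set.range (wseq a lam x h) ∪ {((0 : ℝ), (0 : ℝ))}) \ {((0 : ℝ), (0 : ℝ))}) ∧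
    ∀ p ∈ Set.range (wseq a lam x h) ∪ {((0 : ℝ), (0 : ℝ))}, p ≠ ((0 : ℝ), (0 : ℝ)) →
      p ∉ closure ((Set.range (wseq a lam x h) ∪ {((0 : ℝ), (0 : ℝ))}) \ {p}) := by
  obtain ⟨hθ0, hθ1⟩ := hθ
  set w := wseq a lam x h with hwdef
  set V : Set (ℝ × ℝ) := Set.range w ∪ {((0 : ℝ), (0 : ℝ))} with hVdef
  have hlamR : (3 : ℝ) ≤ (lam : ℝ) := by exact_mod_cast hlam
  have hkl : ∀ k : ℕ, (0 : ℝ) < (k : ℝ) + lam := by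
    intro k
    have : (0:ℝ) ≤ (k:ℝ) := Nat.cast_nonneg k
    linarith
  -- coordinate formulas
  have hX1 : ∀ k : ℕ, (w k).1 = ((k : ℝ) + lam)⁻¹ * ((lam : ℝ) * a + ∑ j ∈ Finset.Icc 1 k, x j) := by
    intro k
    rw [hwdef]
    simp [wseq, vseq, Prod.fst_sum, smul_eq_mul]
    ring
  have hY1 : ∀ k : ℕ, (w k).2 = ((k : ℝ) + lam)⁻¹ * (∑ j ∈ Finset.Icc 1 k, h (x j)) := by
    intro k
    rw [hwdef]
    simp [wseq, vseq, Prod.snd_sum, smul_eq_mul]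
  -- basic positivity of x, h x
  have hx1 : ∀ j : ℕ, 1 ≤ j → 0 < x j := fun j hj => (hx j hj).1
  have hx2 : ∀ j : ℕ, 1 ≤ j → x j < a := fun j hj => (hx j hj).2
  have hxmem : ∀ j : ℕ, 1 ≤ j → x j ∈ Set.Icc 0 a := fun j hj => ⟨(hx1 j hj).le, (hx2 j hj).le⟩
  have hamem : a ∈ Set.Icc 0 a := ⟨ha.le, le_rfl⟩
  have h0mem : (0:ℝ) ∈ Set.Icc 0 a := ⟨le_rfl, ha.le⟩
  have hh1 : ∀ j : ℕ, 1 ≤ j → 0 < h (x j) := by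
    intro j hj
    have := hmono h0mem (hxmem j hj) (hx1 j hj)
    rwa [h0] at this
  -- recurrences
  have hsumX : ∀ k : ℕ, (∑ j ∈ Finset.Icc 1 (k+1), x j) = (∑ j ∈ Finset.Icc 1 k, x j) + x (k+1) :=
    fun k => Finset.sum_Icc_succ_top (Nat.le_add_left 1 k) x
  have hsumY : ∀ k : ℕ, (∑ j ∈ Finset.Icc 1 (k+1), h (x j)) = (∑ j ∈ Finset.Icc 1 k, h (x j)) + h (x (k+1)) :=
    fun k => Finset.sum_Icc_succ_top (Nat.le_add_left 1 k) fun j => h (x j)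
  have hrecX : ∀ k : ℕ, ((k : ℝ) + 1 + lam) * (w (k+1)).1 = ((k : ℝ) + lam) * (w k).1 + x (k+1) := by
    intro k
    rw [hX1 k, hX1 (k+1), hsumX k]
    have h1 := (hkl k).ne'
    have h2 : ((k:ℝ) + 1 + lam) ≠ 0 := by have := hkl (k+1); push_cast at this ⊢; linarith
    push_cast
    field_simp
    try ring
  have hrecY : ∀ k : ℕ, ((k : ℝ) + 1 + lam) * (w (k+1)).2 = ((k : ℝ) + lam) * (w k).2 + h (x (k+1)) := by
    intro k
    rw [hY1 k, hY1 (k+1), hsumY k]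
    have h1 := (hkl k).ne'
    have h2 : ((k:ℝ) + 1 + lam) ≠ 0 := by have := hkl (k+1); push_cast at this ⊢; linarith
    push_cast
    field_simp
    try ring
  -- basic coordinate bounds
  have hdivlt : ∀ A B c : ℝ, 0 < c → A < B → A / c < B / c := by
    intro A B c hc hAB
    rw [div_lt_div_iff₀ hc hc]
    exact mul_lt_mul_of_pos_right hAB hc
  have hXpos : ∀ k : ℕ, 0 < (w k).1 := by
    intro k
    rw [hX1 k]
    have hs : 0 ≤ ∑ j ∈ Finset.Icc 1 k, x j :=
      Finset.sum_nonneg fun j hj => (hx1 j (Finset.mem_Icc.1 hj).1).le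
    have hla : (0:ℝ) < (lam : ℝ) * a := by nlinarith
    exact mul_pos (inv_pos.2 (hkl k)) (by linarith)
  have hXle : ∀ k : ℕ, (w k).1 ≤ a := by
    intro k
    rw [hX1 k]
    have hs : ∑ j ∈ Finset.Icc 1 k, x j ≤ (k:ℝ) * a := by
      have h1 := Finset.sum_le_card_nsmul (Finset.Icc 1 k) x a
        fun j hj => (hx2 j (Finset.mem_Icc.1 hj).1).le
      simpa [Nat.card_Icc, nsmul_eq_mul] using h1
    have hc := hkl k
    have h2 : (lam : ℝ) * a + ∑ j ∈ Finset.Icc 1 k, x j ≤ ((k:ℝ) + lam) * a := by nlinarith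
    calc ((k:ℝ) + lam)⁻¹ * ((lam : ℝ) * a + ∑ j ∈ Finset.Icc 1 k, x j)
        ≤ ((k:ℝ) + lam)⁻¹ * (((k:ℝ) + lam) * a) :=
          mul_le_mul_of_nonneg_left h2 (inv_pos.2 hc).le
      _ = a := by field_simp
  have hXmem : ∀ k : ℕ, (w k).1 ∈ Set.Icc 0 a := fun k => ⟨(hXpos k).le, hXle k⟩
  have hlampos : (0:ℝ) < (lam:ℝ) := by linarith
  have hw0 : w 0 = (a, 0) := by
    have h1 : (w 0).1 = a := by
      rw [hX1 0]
      simp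
      field_simp
    have h2 : (w 0).2 = 0 := by
      rw [hY1 0]
      simp
    exact Prod.ext h1 h2
  have hXlt : ∀ k : ℕ, 1 ≤ k → (w k).1 < a := by
    intro k hk
    have hne : (Finset.Icc 1 k).Nonempty := ⟨1, Finset.mem_Icc.2 ⟨le_rfl, hk⟩⟩
    have hs : ∑ j ∈ Finset.Icc 1 k, x j < (k:ℝ) * a := by
      have h1 := Finset.sum_lt_sum_of_nonempty hne
        (g := fun _ => a) fun j hj => hx2 j (Finset.mem_Icc.1 hj).1
      simpa [Finset.sum_const, Nat.card_Icc, nsmul_eq_mul] using h1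
    rw [hX1 k]
    have hc := hkl k
    have h2 : (lam : ℝ) * a + ∑ j ∈ Finset.Icc 1 k, x j < ((k:ℝ) + lam) * a := by nlinarith
    calc ((k:ℝ) + lam)⁻¹ * ((lam : ℝ) * a + ∑ j ∈ Finset.Icc 1 k, x j)
        < ((k:ℝ) + lam)⁻¹ * (((k:ℝ) + lam) * a) :=
          mul_lt_mul_of_pos_left h2 (inv_pos.2 hc)
      _ = a := by field_simp
  have hYpos : ∀ k : ℕ, 1 ≤ k → 0 < (w k).2 := by
    intro k hk
    have hne : (Finset.Icc 1 k).Nonempty := ⟨1, Finset.mem_Icc.2 ⟨le_rfl, hk⟩⟩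
    rw [hY1 k]
    exact mul_pos (inv_pos.2 (hkl k))
      (Finset.sum_pos (fun j hj => hh1 j (Finset.mem_Icc.1 hj).1) hne)
  have hxltX : ∀ k j : ℕ, k < j → x j < (w k).1 := by
    intro k j hkj
    have hj1 : 1 ≤ j := by omega
    have h1 : (k:ℝ) * x j ≤ ∑ i ∈ Finset.Icc 1 k, x i := by
      have h2 := Finset.card_nsmul_le_sum (Finset.Icc 1 k) x (x j) fun i hi => by
        have hi' := Finset.mem_Icc.1 hi
        exact (hanti hi'.1 hj1 (lt_of_le_of_lt hi'.2 hkj)).le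
      simpa [Nat.card_Icc, nsmul_eq_mul] using h2
    have h3 : (lam:ℝ) * x j < (lam:ℝ) * a := mul_lt_mul_of_pos_left (hx2 j hj1) hlampos
    rw [hX1 k]
    have hc := hkl k
    have h4 : ((k:ℝ) + lam) * x j < (lam : ℝ) * a + ∑ i ∈ Finset.Icc 1 k, x i := by nlinarith
    calc x j = ((k:ℝ) + lam)⁻¹ * (((k:ℝ) + lam) * x j) := by field_simp
      _ < ((k:ℝ) + lam)⁻¹ * ((lam : ℝ) * a + ∑ i ∈ Finset.Icc 1 k, x i) :=
          mul_lt_mul_of_pos_left h4 (inv_pos.2 hc)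
  have hXdec : ∀ k : ℕ, (w (k+1)).1 < (w k).1 := by
    intro k
    have h1 := hxltX k (k+1) (Nat.lt_succ_self k)
    have h2 := hrecX k
    have h3 := hkl k
    nlinarith
  have hXanti : StrictAnti fun k => (w k).1 := strictAnti_nat_of_succ_lt hXdec
  -- strictly below the graph
  have hbelow : ∀ k : ℕ, (w k).2 < h ((w k).1) := by
    intro k
    induction k with
    | zero =>
      rw [hw0]
      simpa [hab] using hb
    | succ n ih =>
      have hc : (0:ℝ) < (n:ℝ) + 1 + lam := by have := hkl n; linarith
      set c1 : ℝ := ((n:ℝ) + lam) / ((n:ℝ) + 1 + lam) with hc1def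
      set c2 : ℝ := 1 / ((n:ℝ) + 1 + lam) with hc2def
      have hc1 : 0 < c1 := div_pos (hkl n) hc
      have hc2 : 0 < c2 := div_pos one_pos hc
      have hcs : c1 + c2 = 1 := by rw [hc1def, hc2def]; field_simp; ring
      have hcomb : c1 * (w n).1 + c2 * x (n+1) = (w (n+1)).1 := by
        rw [hc1def, hc2def]
        field_simp
        linarith [hrecX n]
      have hYc : (w (n+1)).2 = c1 * (w n).2 + c2 * h (x (n+1)) := by
        rw [hc1def, hc2def]
        field_simp
        linarith [hrecY n]
      have key := hconc.concaveOn.2 (hXmem n) (hxmem (n+1) (Nat.le_add_left 1 n))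
        hc1.le hc2.le hcs
      simp only [smul_eq_mul] at key
      rw [hcomb] at key
      have h1 : c1 * (w n).2 < c1 * h ((w n).1) := mul_lt_mul_of_pos_left ih hc1
      rw [hYc]
      linarith
  -- slopes
  set m : ℕ → ℝ := fun k => (h (x k) - (w (k-1)).2) / (x k - (w (k-1)).1) with hmdef
  have hm : ∀ j : ℕ, m (j+1) = (h (x (j+1)) - (w j).2) / (x (j+1) - (w j).1) := fun j => rfl
  have hden : ∀ j : ℕ, x (j+1) - (w j).1 < 0 := by
    intro j; have := hxltX j (j+1) (Nat.lt_succ_self j); linarith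
  have hlineid : ∀ j : ℕ, h (x (j+1)) - (w j).2 = m (j+1) * (x (j+1) - (w j).1) := by
    intro j; rw [hm j, div_mul_cancel₀ _ (ne_of_lt (hden j))]
  have hslope : ∀ j : ℕ, (w (j+1)).2 - (w j).2 = m (j+1) * ((w (j+1)).1 - (w j).1) := by
    intro j
    have hc : (0:ℝ) < (j:ℝ) + 1 + lam := by have := hkl j; linarith
    have e1 : ((j:ℝ) + 1 + lam) * ((w (j+1)).2 - (w j).2) = h (x (j+1)) - (w j).2 := by
      linear_combination hrecY j
    have e2 : ((j:ℝ) + 1 + lam) * ((w (j+1)).1 - (w j).1) = x (j+1) - (w j).1 := by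
      linear_combination hrecX j
    refine mul_left_cancel₀ hc.ne' ?_
    linear_combination e1 + hlineid j - m (j+1) * e2
  have hinter : ∀ j : ℕ, (w (j+1)).2 - h (x (j+1)) = m (j+1) * ((w (j+1)).1 - x (j+1)) := by
    intro j
    have h1 := hlineid j
    have h2 := hslope j
    nlinarith [h1, h2]
  have keyA : ∀ j : ℕ, ∀ t : ℝ, 0 ≤ t → t < x (j+1) →
      m (j+1) < (h t - h (x (j+1))) / (t - x (j+1)) := by
    intro j t ht0 htlt
    have hj1 : 1 ≤ j + 1 := Nat.le_add_left 1 j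
    have hξmem : x (j+1) ∈ Set.Icc 0 a := hxmem (j+1) hj1
    have hpmem := hXmem j
    have hq := hbelow j
    have hpgt : x (j+1) < (w j).1 := by linarith [hden j]
    have htmem : t ∈ Set.Icc 0 a := ⟨ht0, by linarith [hx2 (j+1) hj1]⟩
    have hrw : m (j+1) = ((w j).2 - h (x (j+1))) / ((w j).1 - x (j+1)) := by
      rw [hm j, show h (x (j+1)) - (w j).2 = -((w j).2 - h (x (j+1))) from by ring,
        show x (j+1) - (w j).1 = -((w j).1 - x (j+1)) from by ring, neg_div_neg_eq]
    have step1 : m (j+1) < (h ((w j).1) - h (x (j+1))) / ((w j).1 - x (j+1)) := by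
      rw [hrw]
      exact hdivlt _ _ _ (by linarith) (by linarith)
    have step2 := hconc.secant_strict_mono hξmem htmem hpmem (ne_of_lt htlt)
      (ne_of_gt hpgt) (htlt.trans hpgt)
    linarith
  have hxdec : ∀ j : ℕ, x (j+2) < x (j+1) := fun j =>
    hanti (Nat.le_add_left 1 j) (Nat.le_add_left 1 (j+1)) (by omega)
  have hmlt : ∀ j : ℕ, m (j+1) < m (j+2) := by
    intro j
    have hA := keyA j (x (j+2)) (hx1 (j+2) (Nat.le_add_left 1 (j+1))).le (hxdec j)
    have hd1 : x (j+2) - x (j+1) < 0 := by linarith [hxdec j]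
    have hN : h (x (j+2)) - h (x (j+1)) < m (j+1) * (x (j+2) - x (j+1)) :=
      (lt_div_iff_of_neg hd1).1 hA
    have hid := hinter j
    have hF : h (x (j+2)) - (w (j+1)).2 - m (j+1) * (x (j+2) - (w (j+1)).1) < 0 := by nlinarith
    have hd2 := hden (j+1)
    rw [show j + 2 = (j+1) + 1 from rfl, hm (j+1)]
    rw [lt_div_iff_of_neg hd2]
    nlinarith
  have hmmono : ∀ i j : ℕ, 1 ≤ i → i ≤ j → m i ≤ m j := by
    have key : ∀ d n : ℕ, m (n+1) ≤ m (n+1+d) := by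
      intro d
      induction d with
      | zero => intro n; exact le_rfl
      | succ p ih =>
        intro n
        have h1 := ih n
        have h2 := hmlt (n + p)
        have : n + 1 + p = n + p + 1 := by omega
        rw [this] at h1
        have : n + 1 + (p + 1) = n + p + 2 := by omega
        rw [this]
        linarith
    intro i j h1i hij
    obtain ⟨n, rfl⟩ : ∃ n, i = n + 1 := ⟨i - 1, by omega⟩
    have := key (j - (n+1)) n
    have he : n + 1 + (j - (n + 1)) = j := by omega
    rwa [he] at this
  have hintpos : ∀ j : ℕ, 0 < h (x (j+1)) - m (j+1) * x (j+1) := by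
    intro j
    have hξpos := hx1 (j+1) (Nat.le_add_left 1 j)
    have hA := keyA j 0 le_rfl hξpos
    rw [h0, show ((0:ℝ) - h (x (j+1))) / (0 - x (j+1)) = h (x (j+1)) / x (j+1) from by
      rw [zero_sub, zero_sub, neg_div_neg_eq]] at hA
    have := (lt_div_iff₀ hξpos).1 hA
    linarith
  -- chain estimates
  have hchainL : ∀ d j : ℕ, (w j).2 - (w (j+d)).2 ≤ m (j+d) * ((w j).1 - (w (j+d)).1) := by
    intro d
    induction d with
    | zero => intro j; simp
    | succ n ih =>
      intro j
      have e1 := hslope j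
      have e2 := ih (j+1)
      have hidx : j + 1 + n = j + (n + 1) := by omega
      rw [hidx] at e2
      have hm1 : m (j+1) ≤ m (j + (n+1)) := hmmono (j+1) (j+(n+1)) (Nat.le_add_left 1 j) (by omega)
      have hxd : 0 ≤ (w j).1 - (w (j+1)).1 := by linarith [hXdec j]
      have p1 : (w j).2 - (w (j+1)).2 ≤ m (j + (n+1)) * ((w j).1 - (w (j+1)).1) := by
        have h2 : m (j+1) * ((w j).1 - (w (j+1)).1) ≤ m (j + (n+1)) * ((w j).1 - (w (j+1)).1) :=
          mul_le_mul_of_nonneg_right hm1 hxd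
        linarith
      have hr : m (j+(n+1)) * ((w j).1 - (w (j+1)).1) + m (j+(n+1)) * ((w (j+1)).1 - (w (j+(n+1))).1)
          = m (j+(n+1)) * ((w j).1 - (w (j+(n+1))).1) := by ring
      linarith
  have hchainR : ∀ k d : ℕ, (w (k+d)).2 - (w k).2 ≤ m (k+1) * ((w (k+d)).1 - (w k).1) := by
    intro k d
    induction d with
    | zero => simp
    | succ n ih =>
      have e1 := hslope (k+n)
      have hm1 : m (k+1) ≤ m (k+n+1) := hmmono (k+1) (k+n+1) (Nat.le_add_left 1 k) (by omega)
      have hxd : (w (k+n+1)).1 - (w (k+n)).1 ≤ 0 := by linarith [hXdec (k+n)]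
      have p1 : (w (k+n+1)).2 - (w (k+n)).2 ≤ m (k+1) * ((w (k+n+1)).1 - (w (k+n)).1) := by
        have h2 : m (k+n+1) * ((w (k+n+1)).1 - (w (k+n)).1)
            ≤ m (k+1) * ((w (k+n+1)).1 - (w (k+n)).1) :=
          mul_le_mul_of_nonpos_right hm1 hxd
        linarith
      have hidx : k + (n+1) = k + n + 1 := by omega
      rw [hidx]
      have hr : m (k+1) * ((w (k+n+1)).1 - (w (k+n)).1) + m (k+1) * ((w (k+n)).1 - (w k).1)
          = m (k+1) * ((w (k+n+1)).1 - (w k).1) := by ring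
      linarith
  -- extremality
  have hVmem : ∀ k : ℕ, w k ∈ V := fun k => Or.inl ⟨k, rfl⟩
  have h0V : ((0:ℝ), (0:ℝ)) ∈ V := Or.inr rfl
  have hext : V ⊆ Set.extremePoints ℝ (convexHull ℝ V) := by
    intro p hp
    rcases hp with ⟨k, rfl⟩ | hp
    · rcases k with _ | k
      · -- w 0 = (a,0), expose with the first coordinate
        refine extreme_of_strict_max (hVmem 0) (LinearMap.fst ℝ ℝ ℝ) ?_
        rintro q hq hne
        have hfw0 : (LinearMap.fst ℝ ℝ ℝ) (w 0) = a := by rw [hw0]; rfl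
        rcases hq with ⟨j, rfl⟩ | hq
        · have hj : 1 ≤ j := by
            rcases Nat.eq_zero_or_pos j with rfl | hj
            · exact absurd rfl hne
            · exact hj
          rw [hfw0]
          exact hXlt j hj
        · rw [Set.mem_singleton_iff] at hq
          subst hq
          rw [hfw0]
          simpa using ha
      · -- w (k+1), expose with u.2 - μ u.1
        set μ : ℝ := (m (k+1) + m (k+2)) / 2 with hμdef
        have hμ1 : m (k+1) < μ := by have := hmlt k; rw [hμdef]; linarith
        have hμ2 : μ < m (k+2) := by have := hmlt k; rw [hμdef]; linarith
        set f : (ℝ × ℝ) →ₗ[ℝ] ℝ := LinearMap.snd ℝ ℝ ℝ - μ • LinearMap.fst ℝ ℝ ℝ with hfdef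
        have hfapp : ∀ q : ℝ × ℝ, f q = q.2 - μ * q.1 := by
          intro q
          simp [hfdef]
        have hline' : (w (k+1)).2 - m (k+2) * (w (k+1)).1
            = h (x (k+2)) - m (k+2) * x (k+2) := by
          have hline : h (x (k+2)) - (w (k+1)).2 = m (k+2) * (x (k+2) - (w (k+1)).1) :=
            hlineid (k+1)
          linear_combination -hline
        have hip : 0 < h (x (k+2)) - m (k+2) * x (k+2) := hintpos (k+1)
        have key0 : 0 < (w (k+1)).2 - μ * (w (k+1)).1 := by
          have hXp := hXpos (k+1)
          have hpr : 0 < (m (k+2) - μ) * (w (k+1)).1 := mul_pos (by linarith) hXp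
          have hr : (w (k+1)).2 - μ * (w (k+1)).1
              = ((w (k+1)).2 - m (k+2) * (w (k+1)).1) + (m (k+2) - μ) * (w (k+1)).1 := by ring
          linarith
        refine extreme_of_strict_max (hVmem (k+1)) f ?_
        rintro q hq hne
        rcases hq with ⟨j, rfl⟩ | hq
        · have hjne : j ≠ k + 1 := by rintro rfl; exact hne rfl
          rw [hfapp, hfapp]
          rcases lt_or_gt_of_ne hjne with hj | hj
          · obtain ⟨d, hd⟩ : ∃ d, j + d = k + 1 := ⟨k + 1 - j, by omega⟩
            have hch : (w j).2 - (w (k+1)).2 ≤ m (k+1) * ((w j).1 - (w (k+1)).1) := by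
              have h1 := hchainL d j
              rw [hd] at h1
              exact h1
            have hxgt : 0 < (w j).1 - (w (k+1)).1 := sub_pos.2 (hXanti hj)
            have hmul : m (k+1) * ((w j).1 - (w (k+1)).1) < μ * ((w j).1 - (w (k+1)).1) :=
              mul_lt_mul_of_pos_right hμ1 hxgt
            have hr : μ * ((w j).1 - (w (k+1)).1) = μ * (w j).1 - μ * (w (k+1)).1 := by ring
            linarith
          · obtain ⟨d, hd⟩ : ∃ d, (k + 1) + d = j := ⟨j - (k + 1), by omega⟩
            have hch : (w j).2 - (w (k+1)).2 ≤ m (k+2) * ((w j).1 - (w (k+1)).1) := by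
              have h1 : (w ((k+1)+d)).2 - (w (k+1)).2
                  ≤ m (k+2) * ((w ((k+1)+d)).1 - (w (k+1)).1) := hchainR (k+1) d
              rw [hd] at h1
              exact h1
            have hxlt' : (w j).1 - (w (k+1)).1 < 0 := sub_neg.2 (hXanti hj)
            have hmul : m (k+2) * ((w j).1 - (w (k+1)).1) < μ * ((w j).1 - (w (k+1)).1) :=
              mul_lt_mul_of_neg_right hμ2 hxlt'
            have hr : μ * ((w j).1 - (w (k+1)).1) = μ * (w j).1 - μ * (w (k+1)).1 := by ring
            linarith
        · rw [Set.mem_singleton_iff] at hq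
          subst hq
          rw [hfapp, hfapp]
          simpa using key0
    · rw [Set.mem_singleton_iff] at hp
      subst hp
      refine extreme_of_strict_max h0V (-(LinearMap.fst ℝ ℝ ℝ)) ?_
      rintro q hq hne
      rcases hq with ⟨j, rfl⟩ | hq
      · have : 0 < (w j).1 := hXpos j
        simpa using this
      · rw [Set.mem_singleton_iff] at hq
        exact absurd hq hne
  -- convergence
  have hgeom : ∀ k : ℕ, ∑ j ∈ Finset.Icc 1 k, θ ^ j ≤ θ / (1 - θ) := by
    have key : ∀ k : ℕ, ∑ j ∈ Finset.Icc 1 k, θ ^ j = (θ - θ ^ (k+1)) / (1 - θ) := by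
      intro k
      induction k with
      | zero => simp
      | succ n ih =>
        rw [Finset.sum_Icc_succ_top (Nat.le_add_left 1 n), ih]
        have h1 : (1:ℝ) - θ ≠ 0 := by linarith
        field_simp
        ring
    intro k
    rw [key k]
    have h1 : (0:ℝ) < 1 - θ := by linarith
    have h2 : 0 < θ ^ (k+1) := pow_pos hθ0 _
    have h3 : θ - θ ^ (k+1) ≤ θ := by linarith
    gcongr
  have hxb : ∀ j : ℕ, 1 ≤ j → x j ≤ C * θ ^ j := by
    intro j hj
    have h1 : x j ≤ Real.sqrt ((x j) ^ 2 + (h (x j)) ^ 2) := by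
      have h2 : Real.sqrt ((x j)^2) ≤ Real.sqrt ((x j) ^ 2 + (h (x j)) ^ 2) :=
        Real.sqrt_le_sqrt (by nlinarith [sq_nonneg (h (x j))])
      rwa [Real.sqrt_sq (hx1 j hj).le] at h2
    exact le_of_lt (lt_of_le_of_lt h1 (hnorm j hj))
  have hhb : ∀ j : ℕ, 1 ≤ j → h (x j) ≤ C * θ ^ j := by
    intro j hj
    have h1 : h (x j) ≤ Real.sqrt ((x j) ^ 2 + (h (x j)) ^ 2) := by
      have h2 : Real.sqrt ((h (x j))^2) ≤ Real.sqrt ((x j) ^ 2 + (h (x j)) ^ 2) :=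
        Real.sqrt_le_sqrt (by nlinarith [sq_nonneg (x j)])
      rwa [Real.sqrt_sq (hh1 j hj).le] at h2
    exact le_of_lt (lt_of_le_of_lt h1 (hnorm j hj))
  set D : ℝ := (lam : ℝ) * a + C * (θ / (1 - θ)) with hDdef
  have hsumbX : ∀ k : ℕ, (lam : ℝ) * a + ∑ j ∈ Finset.Icc 1 k, x j ≤ D := by
    intro k
    have h1 : ∑ j ∈ Finset.Icc 1 k, x j ≤ ∑ j ∈ Finset.Icc 1 k, C * θ ^ j :=
      Finset.sum_le_sum fun j hj => hxb j (Finset.mem_Icc.1 hj).1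
    have h2 : ∑ j ∈ Finset.Icc 1 k, C * θ ^ j = C * ∑ j ∈ Finset.Icc 1 k, θ ^ j := by
      rw [Finset.mul_sum]
    have h3 := hgeom k
    have h4 : C * ∑ j ∈ Finset.Icc 1 k, θ ^ j ≤ C * (θ / (1 - θ)) :=
      mul_le_mul_of_nonneg_left h3 hC.le
    rw [hDdef]
    linarith
  have hsumbY : ∀ k : ℕ, ∑ j ∈ Finset.Icc 1 k, h (x j) ≤ D := by
    intro k
    have h1 : ∑ j ∈ Finset.Icc 1 k, h (x j) ≤ ∑ j ∈ Finset.Icc 1 k, C * θ ^ j :=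
      Finset.sum_le_sum fun j hj => hhb j (Finset.mem_Icc.1 hj).1
    have h2 : ∑ j ∈ Finset.Icc 1 k, C * θ ^ j = C * ∑ j ∈ Finset.Icc 1 k, θ ^ j := by
      rw [Finset.mul_sum]
    have h4 : C * ∑ j ∈ Finset.Icc 1 k, θ ^ j ≤ C * (θ / (1 - θ)) :=
      mul_le_mul_of_nonneg_left (hgeom k) hC.le
    have h5 : (0:ℝ) ≤ (lam : ℝ) * a := by positivity
    rw [hDdef]
    linarith
  have hDtend : Filter.Tendsto (fun k : ℕ => D * ((k : ℝ) + lam)⁻¹) Filter.atTop (nhds 0) := by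
    have h1 : Filter.Tendsto (fun k : ℕ => (k : ℝ) + lam) Filter.atTop Filter.atTop :=
      Filter.tendsto_atTop_add_const_right _ _ tendsto_natCast_atTop_atTop
    have h2 := h1.inv_tendsto_atTop
    have h3 := h2.const_mul D
    simpa using h3
  have hXtend : Filter.Tendsto (fun k => (w k).1) Filter.atTop (nhds 0) := by
    refine squeeze_zero (g := fun k : ℕ => D * ((k : ℝ) + lam)⁻¹)
      (fun k => (hXpos k).le) (fun k => ?_) hDtend
    rw [hX1 k, mul_comm]
    exact mul_le_mul_of_nonneg_right (hsumbX k) (inv_pos.2 (hkl k)).le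
  have hYtend : Filter.Tendsto (fun k => (w k).2) Filter.atTop (nhds 0) := by
    refine squeeze_zero (g := fun k : ℕ => D * ((k : ℝ) + lam)⁻¹)
      (fun k => ?_) (fun k => ?_) hDtend
    · rw [hY1 k]
      exact mul_nonneg (inv_pos.2 (hkl k)).le
        (Finset.sum_nonneg fun j hj => (hh1 j (Finset.mem_Icc.1 hj).1).le)
    · rw [hY1 k, mul_comm]
      exact mul_le_mul_of_nonneg_right (hsumbY k) (inv_pos.2 (hkl k)).le
  have hwtend : Filter.Tendsto w Filter.atTop (nhds ((0:ℝ), (0:ℝ))) := by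
    have := Filter.Tendsto.prodMk_nhds hXtend hYtend
    exact this
  have hwne0 : ∀ k : ℕ, w k ≠ ((0:ℝ), (0:ℝ)) := by
    intro k he
    have : (w k).1 = 0 := by rw [he]
    exact absurd this (ne_of_gt (hXpos k))
  refine ⟨hext, ?_, ?_⟩
  · exact mem_closure_of_tendsto hwtend (Filter.Eventually.of_forall fun k =>
      ⟨hVmem k, by simpa using hwne0 k⟩)
  · -- isolation
    intro p hp hpne
    have hpr : ∃ mm, w mm = p := by
      rcases hp with ⟨mm, rfl⟩ | hp
      · exact ⟨mm, rfl⟩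
      · rw [Set.mem_singleton_iff] at hp
        exact absurd hp hpne
    obtain ⟨mm, rfl⟩ := hpr
    have hfst : ∀ u v : ℝ × ℝ, dist u.1 v.1 ≤ dist u v := by
      intro u v
      rw [Prod.dist_eq]
      exact le_max_left _ _
    have habs : ∀ u v : ℝ, u - v ≤ dist u v := by
      intro u v
      rw [Real.dist_eq]
      exact le_abs_self _
    have habs' : ∀ u v : ℝ, v - u ≤ dist u v := by
      intro u v
      rw [Real.dist_eq, abs_sub_comm]
      exact le_abs_self _
    have key : ∃ ε : ℝ, 0 < ε ∧ ∀ q ∈ V \ {w mm}, ε ≤ dist (w mm) q := by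
      rcases mm with _ | n
      · refine ⟨(w 0).1 - (w 1).1, sub_pos.2 (hXdec 0), ?_⟩
        rintro q ⟨hqV, hqne⟩
        rw [Set.mem_singleton_iff] at hqne
        rcases hqV with ⟨j, rfl⟩ | hq0
        · have hj : 1 ≤ j := by
            rcases Nat.eq_zero_or_pos j with rfl | hj
            · exact absurd rfl hqne
            · exact hj
          have h1 : (w j).1 ≤ (w 1).1 := hXanti.antitone hj
          calc (w 0).1 - (w 1).1 ≤ (w 0).1 - (w j).1 := by linarith
            _ ≤ dist ((w 0).1) ((w j).1) := habs _ _
            _ ≤ dist (w 0) (w j) := hfst _ _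
        · rw [Set.mem_singleton_iff] at hq0
          subst hq0
          have h1 := hXpos 1
          calc (w 0).1 - (w 1).1 ≤ (w 0).1 - (0:ℝ) := by linarith
            _ ≤ dist ((w 0).1) (((0:ℝ),(0:ℝ)).1) := habs _ _
            _ ≤ dist (w 0) ((0:ℝ),(0:ℝ)) := hfst _ _
      · refine ⟨min ((w n).1 - (w (n+1)).1) ((w (n+1)).1 - (w (n+2)).1),
          lt_min (sub_pos.2 (hXdec n)) (sub_pos.2 (hXdec (n+1))), ?_⟩
        rintro q ⟨hqV, hqne⟩
        rw [Set.mem_singleton_iff] at hqne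
        rcases hqV with ⟨j, rfl⟩ | hq0
        · have hj : j ≠ n + 1 := by rintro rfl; exact hqne rfl
          rcases lt_or_gt_of_ne hj with hj' | hj'
          · have hjn : j ≤ n := by omega
            have h1 : (w n).1 ≤ (w j).1 := hXanti.antitone hjn
            calc min ((w n).1 - (w (n+1)).1) ((w (n+1)).1 - (w (n+2)).1)
                ≤ (w n).1 - (w (n+1)).1 := min_le_left _ _
              _ ≤ (w j).1 - (w (n+1)).1 := by linarith
              _ ≤ dist ((w (n+1)).1) ((w j).1) := habs' _ _
              _ ≤ dist (w (n+1)) (w j) := hfst _ _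
          · have hjn : n + 2 ≤ j := by omega
            have h1 : (w j).1 ≤ (w (n+2)).1 := hXanti.antitone hjn
            calc min ((w n).1 - (w (n+1)).1) ((w (n+1)).1 - (w (n+2)).1)
                ≤ (w (n+1)).1 - (w (n+2)).1 := min_le_right _ _
              _ ≤ (w (n+1)).1 - (w j).1 := by linarith
              _ ≤ dist ((w (n+1)).1) ((w j).1) := habs _ _
              _ ≤ dist (w (n+1)) (w j) := hfst _ _
        · rw [Set.mem_singleton_iff] at hq0
          subst hq0
          have h1 := hXpos (n+2)
          calc min ((w n).1 - (w (n+1)).1) ((w (n+1)).1 - (w (n+2)).1)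
              ≤ (w (n+1)).1 - (w (n+2)).1 := min_le_right _ _
            _ ≤ (w (n+1)).1 - (0:ℝ) := by linarith
            _ ≤ dist ((w (n+1)).1) (((0:ℝ),(0:ℝ)).1) := habs _ _
            _ ≤ dist (w (n+1)) ((0:ℝ),(0:ℝ)) := hfst _ _
    obtain ⟨ε, hεpos, hbound⟩ := key
    intro hc
    rw [Metric.mem_closure_iff] at hc
    obtain ⟨q, hq, hd⟩ := hc ε hεpos
    exact absurd hd (not_lt.2 (hbound q hq))
end

section
/- Let X = {0,1,2}^ℕ with metric d_θ, θ ∈ (0,1), and let Φ : X → ℝ² be the potential defined by: Φ(ξ) = w₀ if ξ ∈ X₀(λ); Φ(ξ) = u_{l−λ} if ξ ∈ X(l) \ C_{l−1}(1^{l−1}) with l > λ; Φ(ξ) = v_{l−λ} if ξ ∈ X(l) ∩ C_{l−1}(1^{l−1}) with l > λ; Φ(ξ) = w_∞ if ξ ∈ X(∞). Then Φ is Lipschitz continuous with Lipschitz constant max{C₁θ^{−λ}, 2Cθ^{−λ}}, where C₁ = sup{‖u−v‖ : u,v ∈ Φ(X)}. -/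
open scoped Classical ENNReal NNReal

open MeasureTheory

/-- The shift map on the one-sided full shift `{0,1,2}^ℕ`. -/
def shiftMap (ξ : ℕ → Fin 3) : ℕ → Fin 3 := fun k => ξ (k + 1)

/-- The metric `d_θ(ξ,η) = θ^{min{k ≥ 1 : ξ_k ≠ η_k}}` (indexing from `1`). -/
noncomputable def dtheta (θ : ℝ) (ξ η : ℕ → Fin 3) : ℝ :=
  if hne : ξ = η then 0 else θ ^ (Nat.find (Function.ne_iff.mp hne) + 1)

/-- Euclidean norm on `ℝ²`. -/
noncomputable def enorm2 (p : ℝ × ℝ) : ℝ := Real.sqrt (p.1 ^ 2 + p.2 ^ 2)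

/-- `u_k = (x_k, 0)`. -/
noncomputable def useq (x : ℕ → ℝ) (k : ℕ) : ℝ × ℝ := (x k, 0)

/-- The potential `Φ` of Example 1 (sequences indexed from `1`, so a sequence `ξ` lies in
`X(l)` iff the first occurrence of the symbol `2` is at (0-based) index `l - 1`):
`Φ = w₀` on `X₀(λ) = X(1) ∪ ⋯ ∪ X(λ)`; for `l > λ`, `Φ = v_{l-λ}` on
`X(l) ∩ C_{l-1}(1^{l-1})` and `Φ = u_{l-λ}` on `X(l) \ C_{l-1}(1^{l-1})`;
and `Φ = w_∞` on `X(∞) = {0,1}^ℕ`. -/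
noncomputable def Phi (lam : ℕ) (u v : ℕ → ℝ × ℝ) (w0 winf : ℝ × ℝ)
    (ξ : ℕ → Fin 3) : ℝ × ℝ :=
  if hex : ∃ k, ξ k = 2 then
    let l := Nat.find hex + 1
    if l ≤ lam then w0
    else if ∀ i < l - 1, ξ i = 1 then v (l - lam) else u (l - lam)
  else winf

/-- The periodic point measure `μ_x = (1/n)(δ_x + ⋯ + δ_{f^{n-1}x})`. -/
noncomputable def pmeasure (n : ℕ) (x : ℕ → Fin 3) : Measure (ℕ → Fin 3) :=
  ((n : ℝ≥0∞))⁻¹ • ∑ i ∈ Finset.range n, Measure.dirac (shiftMap^[i] x)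

/-- The periodic point `ξ^k = O(1^{k+λ-1} 2)` of period `k+λ`. -/
def xiseq (lam k : ℕ) : ℕ → Fin 3 :=
  fun i => if i % (k + lam) = k + lam - 1 then 2 else 1

/-!
If `ξ` and `η` agree on their first `n` symbols, then either a `2` occurs among them, in which
case both lie in the same `X(l)` and `Φ ξ = Φ η`, or neither has a `2` before position `n`. In
the latter case, for `n ≥ λ`, the values `Φ ξ`, `Φ η` are among `w_∞`, `u_k`, `v_k` with
`k ≥ n + 1 - λ`, all of norm at most `C θ^(n+1-λ)`; for `n < λ` the diameter bound
`C₁ ≤ C₁ θ^(n+1-λ)` suffices.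
-/

lemma enorm2_eq_norm (p : ℝ × ℝ) : enorm2 p = ‖(⟨p.1, p.2⟩ : ℂ)‖ := by
  rw [enorm2, Complex.norm_def, Complex.normSq_mk]
  congr 1
  ring

lemma enorm2_nonneg (p : ℝ × ℝ) : 0 ≤ enorm2 p := Real.sqrt_nonneg _

lemma enorm2_sub_le (p q : ℝ × ℝ) : enorm2 (p - q) ≤ enorm2 p + enorm2 q := by
  have hsub : (⟨(p - q).1, (p - q).2⟩ : ℂ) = ⟨p.1, p.2⟩ - ⟨q.1, q.2⟩ := by
    apply Complex.ext <;> simp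
  simpa only [enorm2_eq_norm, hsub] using norm_sub_le (⟨p.1, p.2⟩ : ℂ) ⟨q.1, q.2⟩

lemma enorm2_useq_le_vseq (x : ℕ → ℝ) (h : ℝ → ℝ) (k : ℕ) :
    enorm2 (useq x k) ≤ enorm2 (vseq x h k) :=
  Real.sqrt_le_sqrt (by simp only [useq, vseq]; nlinarith [sq_nonneg (h (x k))])

lemma enorm2_sub_le_sSup {α : Type*} {B : ℝ} (g : α → ℝ × ℝ) (hg : ∀ ζ, enorm2 (g ζ) ≤ B)
    (ξ η : α) : enorm2 (g ξ - g η) ≤ sSup {r : ℝ | ∃ ζ ζ' : α, r = enorm2 (g ζ - g ζ')} := by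
  refine le_csSup ⟨B + B, ?_⟩ ⟨ξ, η, rfl⟩
  rintro r ⟨ζ, ζ', rfl⟩
  exact (enorm2_sub_le _ _).trans (add_le_add (hg ζ) (hg ζ'))

lemma enorm2_sub_le_mul_dtheta {θ K : ℝ} {g : (ℕ → Fin 3) → ℝ × ℝ}
    (hg : ∀ ξ η n, (∀ i < n, ξ i = η i) → enorm2 (g ξ - g η) ≤ K * θ ^ (n + 1))
    (ξ η : ℕ → Fin 3) : enorm2 (g ξ - g η) ≤ K * dtheta θ ξ η := by
  unfold dtheta
  split_ifs with hne
  · simp [hne, enorm2]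
  · exact hg ξ η _ fun i hi => not_ne_iff.mp (Nat.find_min _ hi)

section Phi

variable {lam n : ℕ} {u v : ℕ → ℝ × ℝ} {w0 winf : ℝ × ℝ}

lemma Phi_eq_of_agree {ξ η : ℕ → Fin 3} {k : ℕ} (hagree : ∀ i < n, ξ i = η i) (hk : k < n)
    (hξk : ξ k = 2) : Phi lam u v w0 winf ξ = Phi lam u v w0 winf η := by
  have hexξ : ∃ m, ξ m = 2 := ⟨k, hξk⟩
  have hexη : ∃ m, η m = 2 := ⟨k, hagree k hk ▸ hξk⟩
  have hfind_lt : Nat.find hexξ < n := (Nat.find_min' hexξ hξk).trans_lt hk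
  have hfind : Nat.find hexη = Nat.find hexξ := by
    rw [Nat.find_eq_iff]
    exact ⟨hagree _ hfind_lt ▸ Nat.find_spec hexξ,
      fun m hm => hagree m (hm.trans hfind_lt) ▸ Nat.find_min hexξ hm⟩
  have hones :
      (∀ i < Nat.find hexξ + 1 - 1, ξ i = 1) ↔ (∀ i < Nat.find hexξ + 1 - 1, η i = 1) :=
    forall₂_congr fun i hi => by rw [hagree i (by omega)]
  unfold Phi
  rw [dif_pos hexξ, dif_pos hexη, hfind]
  simp only [hones]

lemma enorm2_Phi_le_of_forall_ne_two {ζ : ℕ → Fin 3} {B : ℝ} (hζ : ∀ k < n, ζ k ≠ 2)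
    (hw0 : n < lam → enorm2 w0 ≤ B) (hwinf : enorm2 winf ≤ B)
    (hu : ∀ k, n + 1 - lam ≤ k → 1 ≤ k → enorm2 (u k) ≤ B)
    (hv : ∀ k, n + 1 - lam ≤ k → 1 ≤ k → enorm2 (v k) ≤ B) :
    enorm2 (Phi lam u v w0 winf ζ) ≤ B := by
  unfold Phi
  split_ifs with hex
  · have : n ≤ Nat.find hex := le_of_not_gt fun hlt => hζ _ hlt (Nat.find_spec hex)
    dsimp only
    split_ifs
    · exact hw0 (by omega)
    · exact hv _ (by omega) (by omega)
    · exact hu _ (by omega) (by omega)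
  · exact hwinf

lemma enorm2_Phi_sub_le_of_agree {ξ η : ℕ → Fin 3} {B : ℝ} (hagree : ∀ i < n, ξ i = η i)
    (hn : lam ≤ n) (hwinf : enorm2 winf ≤ B) (hu : ∀ k, n + 1 - lam ≤ k → enorm2 (u k) ≤ B)
    (hv : ∀ k, n + 1 - lam ≤ k → enorm2 (v k) ≤ B) :
    enorm2 (Phi lam u v w0 winf ξ - Phi lam u v w0 winf η) ≤ 2 * B := by
  by_cases htwo : ∃ k < n, ξ k = 2
  · obtain ⟨k, hk, hξk⟩ := htwo
    rw [Phi_eq_of_agree hagree hk hξk, sub_self]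
    simpa [enorm2] using (enorm2_nonneg winf).trans hwinf
  · push Not at htwo
    have hbound : ∀ ζ : ℕ → Fin 3, (∀ k < n, ζ k ≠ 2) → enorm2 (Phi lam u v w0 winf ζ) ≤ B :=
      fun ζ hζ => enorm2_Phi_le_of_forall_ne_two hζ (by omega) hwinf
        (fun k hk _ => hu k hk) (fun k hk _ => hv k hk)
    calc _ ≤ B + B := (enorm2_sub_le _ _).trans (add_le_add (hbound ξ htwo)
            (hbound η fun k hk => hagree k hk ▸ htwo k hk))
      _ = 2 * B := by ring

end Phi

lemma zpow_neg_mul_pow {G₀ : Type*} [GroupWithZero G₀] {a : G₀} (ha : a ≠ 0) (m n : ℕ) :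
    a ^ (-(m : ℤ)) * a ^ n = a ^ ((n : ℤ) - m) := by
  rw [← zpow_natCast a n, ← zpow_add₀ ha, neg_add_eq_sub]

theorem stmt_13_general (a : ℝ) (lam : ℕ)
    (h : ℝ → ℝ)
    (θ C : ℝ) (hθ : θ ∈ Set.Ioo (0 : ℝ) 1) (hC : 0 < C)
    (x : ℕ → ℝ)
    (hnorm : ∀ k, 1 ≤ k → enorm2 (vseq x h k) < C * θ ^ k) :
    ∀ ξ η : ℕ → Fin 3,
      enorm2 (Phi lam (useq x) (vseq x h) (a, 0) (0, 0) ξ -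
          Phi lam (useq x) (vseq x h) (a, 0) (0, 0) η) ≤
        max ((sSup {r : ℝ | ∃ ζ ζ' : ℕ → Fin 3,
            r = enorm2 (Phi lam (useq x) (vseq x h) (a, 0) (0, 0) ζ -
              Phi lam (useq x) (vseq x h) (a, 0) (0, 0) ζ')}) * θ ^ (-(lam : ℤ)))
          (2 * C * θ ^ (-(lam : ℤ))) * dtheta θ ξ η := by
  obtain ⟨hθ0, hθ1⟩ := hθ
  set Φ := Phi lam (useq x) (vseq x h) (a, 0) (0, 0)
  have hv : ∀ m k, m ≤ k → 1 ≤ k → enorm2 (vseq x h k) ≤ C * θ ^ m := fun m k hmk hk =>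
    (hnorm k hk).le.trans (mul_le_mul_of_nonneg_left
      (pow_le_pow_of_le_one hθ0.le hθ1.le hmk) hC.le)
  have hu : ∀ m k, m ≤ k → 1 ≤ k → enorm2 (useq x k) ≤ C * θ ^ m := fun m k hmk hk =>
    (enorm2_useq_le_vseq x h k).trans (hv m k hmk hk)
  have hwinf : enorm2 ((0 : ℝ), (0 : ℝ)) = 0 := by simp [enorm2]
  have hD := enorm2_sub_le_sSup Φ fun ζ => enorm2_Phi_le_of_forall_ne_two (n := 0)
    (B := max (enorm2 (a, 0)) (C * θ ^ 0)) (by simp) (fun _ => le_max_left _ _)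
    (by rw [hwinf]; positivity) (fun k _ hk => (hu 0 k (by omega) hk).trans (le_max_right _ _))
    (fun k _ hk => (hv 0 k (by omega) hk).trans (le_max_right _ _))
  refine enorm2_sub_le_mul_dtheta (fun ξ η n hagree => ?_)
  rcases lt_or_ge n lam with hn | hn
  · calc _ ≤ _ := hD ξ η
      _ ≤ _ * (θ ^ (-(lam : ℤ)) * θ ^ (n + 1)) :=
          le_mul_of_one_le_right ((enorm2_nonneg _).trans (hD ξ ξ)) (by
            rw [zpow_neg_mul_pow hθ0.ne']
            exact one_le_zpow_of_nonpos₀ hθ0 hθ1.le (by omega))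
      _ ≤ _ := by rw [← mul_assoc]; gcongr; exact le_max_left _ _
  · calc _ ≤ 2 * (C * θ ^ (n + 1 - lam)) :=
          enorm2_Phi_sub_le_of_agree hagree hn (by rw [hwinf]; positivity)
            (fun k hk => hu _ k hk (by omega)) (fun k hk => hv _ k hk (by omega))
      _ = 2 * C * (θ ^ (-(lam : ℤ)) * θ ^ (n + 1)) := by
          rw [zpow_neg_mul_pow hθ0.ne', ← zpow_natCast, Nat.cast_sub (by omega)]; push_cast; ring
      _ ≤ _ := by rw [← mul_assoc]; gcongr; exact le_max_right _ _

/-- the potential `Φ` is Lipschitz continuous with respect to `d_θ`, with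
Lipschitz constant `max{C₁ θ^{-λ}, 2C θ^{-λ}}`, where `C₁ = sup{‖u-v‖ : u,v ∈ Φ(X)}`. -/
theorem stmt_13 (a b : ℝ) (ha : 0 < a) (hb : 0 < b) (lam : ℕ) (hlam : 3 ≤ lam)
    (h : ℝ → ℝ) (hmono : StrictMonoOn h (Set.Icc 0 a))
    (hconc : StrictConcaveOn ℝ (Set.Icc 0 a) h)
    (hcont : ContinuousOn h (Set.Icc 0 a)) (h0 : h 0 = 0) (hab : h a = b)
    (θ C : ℝ) (hθ : θ ∈ Set.Ioo (0 : ℝ) 1) (hC : 0 < C)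
    (x : ℕ → ℝ) (hx : ∀ k, 1 ≤ k → x k ∈ Set.Ioo 0 a)
    (hanti : StrictAntiOn x (Set.Ici 1))
    (hnorm : ∀ k, 1 ≤ k → enorm2 (vseq x h k) < C * θ ^ k) :
    ∀ ξ η : ℕ → Fin 3,
      enorm2 (Phi lam (useq x) (vseq x h) (a, 0) (0, 0) ξ -
          Phi lam (useq x) (vseq x h) (a, 0) (0, 0) η) ≤
        max ((sSup {r : ℝ | ∃ ζ ζ' : ℕ → Fin 3,
            r = enorm2 (Phi lam (useq x) (vseq x h) (a, 0) (0, 0) ζ -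
              Phi lam (useq x) (vseq x h) (a, 0) (0, 0) ζ')}) * θ ^ (-(lam : ℤ)))
          (2 * C * θ ^ (-(lam : ℤ))) * dtheta θ ξ η :=
  stmt_13_general a lam h θ C hθ hC x hnorm
end

section
/- Let f : X → X be the one-sided full shift on {0,1,2}^ℕ and Φ the potential from the construction. Then for every k ≥ 1, the periodic point ξ^k = O(1^{k+λ−1}2) (period k+λ) satisfies rv(μ_{ξ^k}) = w_k, where μ_{ξ^k} is the invariant measure equidistributed on the orbit of ξ^k; moreover rv(μ_{O(02)}) = w₀ and rv(μ_{O(0)}) = w_∞. -/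
open scoped Classical ENNReal NNReal

open MeasureTheory

lemma shift_iter (x : ℕ → Fin 3) (i j : ℕ) : shiftMap^[i] x j = x (j + i) := by
  induction i generalizing x with
  | zero => rfl
  | succ n ih =>
    rw [Function.iterate_succ_apply, ih]
    simp [shiftMap, Nat.add_assoc]

lemma integrable_dirac' (f : (ℕ → Fin 3) → ℝ × ℝ) (a : ℕ → Fin 3) :
    Integrable f (Measure.dirac a) := by
  constructor
  · exact aestronglyMeasurable_const.congr (ae_eq_dirac f).symm
  · rw [HasFiniteIntegral]
    calc ∫⁻ x, ‖f x‖₊ ∂(Measure.dirac a) = ∫⁻ _, (‖f a‖₊ : ℝ≥0∞) ∂(Measure.dirac a) := by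
          refine lintegral_congr_ae ?_
          filter_upwards [ae_eq_dirac f] with x hx
          rw [hx]; rfl
      _ = ‖f a‖₊ := by simp
      _ < ⊤ := by simp

lemma integral_pmeasure (n : ℕ) (x : ℕ → Fin 3) (f : (ℕ → Fin 3) → ℝ × ℝ) :
    ∫ ξ, f ξ ∂(pmeasure n x) = (n : ℝ)⁻¹ • ∑ i ∈ Finset.range n, f (shiftMap^[i] x) := by
  rw [pmeasure, integral_smul_measure,
    integral_finset_sum_measure (fun i _ => integrable_dirac' f _)]
  simp [integral_dirac, ENNReal.toReal_inv]

lemma phi_shift_xi (lam k : ℕ) (hk : 1 ≤ k) (hlam : 3 ≤ lam)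
    (u v : ℕ → ℝ × ℝ) (w0 winf : ℝ × ℝ) (i : ℕ) (hi : i < k + lam) :
    Phi lam u v w0 winf (shiftMap^[i] (xiseq lam k)) =
      if i < k then v (k - i) else w0 := by
  have hval : ∀ j, shiftMap^[i] (xiseq lam k) j = xiseq lam k (j + i) :=
    fun j => shift_iter _ _ _
  have hone : ∀ j, j + i < k + lam - 1 → shiftMap^[i] (xiseq lam k) j = 1 := by
    intro j hj
    rw [hval]
    unfold xiseq
    rw [if_neg]
    rw [Nat.mod_eq_of_lt (by omega)]
    omega
  have hex : ∃ m, shiftMap^[i] (xiseq lam k) m = 2 := by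
    refine ⟨k + lam - 1 - i, ?_⟩
    rw [hval]
    unfold xiseq
    rw [if_pos]
    have h1 : k + lam - 1 - i + i = k + lam - 1 := by omega
    rw [h1, Nat.mod_eq_of_lt (by omega)]
  have hfind : Nat.find hex = k + lam - 1 - i := by
    rw [Nat.find_eq_iff]
    refine ⟨?_, fun m hm => ?_⟩
    · rw [hval]
      unfold xiseq
      rw [if_pos]
      have h1 : k + lam - 1 - i + i = k + lam - 1 := by omega
      rw [h1, Nat.mod_eq_of_lt (by omega)]
    · rw [hone m (by omega)]
      decide
  rw [Phi, dif_pos hex]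
  simp only [hfind]
  by_cases hik : i < k
  · rw [if_pos hik, if_neg (show ¬ (k + lam - 1 - i + 1 ≤ lam) by omega), if_pos]
    · congr 1
      omega
    · intro j hj
      exact hone j (by omega)
  · rw [if_neg hik, if_pos (show k + lam - 1 - i + 1 ≤ lam by omega)]

lemma sum_rev (g : ℕ → ℝ × ℝ) (k : ℕ) :
    ∑ i ∈ Finset.range k, g (k - i) = ∑ j ∈ Finset.Icc 1 k, g j := by
  induction k with
  | zero => simp
  | succ n ih =>
    rw [Finset.sum_range_succ' (fun i => g (n + 1 - i)) n,
      Finset.sum_Icc_succ_top (by omega : 1 ≤ n + 1)]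
    simp only [Nat.sub_zero]
    rw [← ih]
    congr 1
    exact Finset.sum_congr rfl fun i hi => by
      rw [Finset.mem_range] at hi
      congr 1
      omega

/-- `ξ^k = O(1^{k+λ-1}2)` is periodic of period `k+λ` and its periodic
point measure has rotation vector `w_k`; moreover `rv(μ_{O(02)}) = w₀ = (a,0)` and
`rv(μ_{O(0)}) = w_∞ = (0,0)`. -/
theorem stmt_14 (a b : ℝ) (ha : 0 < a) (hb : 0 < b) (lam : ℕ) (hlam : 3 ≤ lam)
    (h : ℝ → ℝ) (hmono : StrictMonoOn h (Set.Icc 0 a))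
    (hconc : StrictConcaveOn ℝ (Set.Icc 0 a) h)
    (hcont : ContinuousOn h (Set.Icc 0 a)) (h0 : h 0 = 0) (hab : h a = b)
    (θ C : ℝ) (hθ : θ ∈ Set.Ioo (0 : ℝ) 1) (hC : 0 < C)
    (x : ℕ → ℝ) (hx : ∀ k, 1 ≤ k → x k ∈ Set.Ioo 0 a)
    (hanti : StrictAntiOn x (Set.Ici 1))
    (hnorm : ∀ k, 1 ≤ k → enorm2 (vseq x h k) < C * θ ^ k) :
    (∀ k, 1 ≤ k →
      shiftMap^[k + lam] (xiseq lam k) = xiseq lam k ∧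
      (∫ ξ, Phi lam (useq x) (vseq x h) (a, 0) (0, 0) ξ
          ∂(pmeasure (k + lam) (xiseq lam k))) = wseq a lam x h k) ∧
    (∫ ξ, Phi lam (useq x) (vseq x h) (a, 0) (0, 0) ξ
        ∂(pmeasure 2 (fun i => if i % 2 = 0 then 0 else 2))) = (a, 0) ∧
    (∫ ξ, Phi lam (useq x) (vseq x h) (a, 0) (0, 0) ξ
        ∂(pmeasure 1 (fun _ => 0))) = (0, 0) := by
  refine ⟨fun k hk => ⟨?_, ?_⟩, ?_, ?_⟩
  · funext j
    rw [shift_iter]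
    unfold xiseq
    rw [Nat.add_mod_right]
  · rw [integral_pmeasure]
    have h1 : ∑ i ∈ Finset.range (k + lam),
        Phi lam (useq x) (vseq x h) (a, 0) (0, 0) (shiftMap^[i] (xiseq lam k)) =
        ∑ i ∈ Finset.range (k + lam),
          (if i < k then vseq x h (k - i) else ((a : ℝ), (0 : ℝ))) :=
      Finset.sum_congr rfl fun i hi =>
        phi_shift_xi lam k hk hlam _ _ _ _ i (Finset.mem_range.mp hi)
    rw [h1, Finset.sum_range_add]
    have h2 : ∑ i ∈ Finset.range k,
        (if i < k then vseq x h (k - i) else ((a:ℝ), (0:ℝ))) =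
        ∑ j ∈ Finset.Icc 1 k, vseq x h j := by
      rw [← sum_rev]
      exact Finset.sum_congr rfl fun i hi => by
        rw [Finset.mem_range] at hi
        rw [if_pos hi]
    have h3 : ∑ i ∈ Finset.range lam,
        (if k + i < k then vseq x h (k - (k + i)) else ((a:ℝ), (0:ℝ)))
        = (lam : ℝ) • ((a:ℝ), (0:ℝ)) := by
      rw [Finset.sum_congr rfl fun i _ => if_neg (by omega), Finset.sum_const,
        ← Nat.cast_smul_eq_nsmul ℝ]
      simp
    rw [h2, h3, wseq, add_comm]
    push_cast
    ring_nf
  · rw [integral_pmeasure]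
    set p : ℕ → Fin 3 := fun i => if i % 2 = 0 then 0 else 2 with hp
    have e0 : Phi lam (useq x) (vseq x h) (a, 0) (0, 0) (shiftMap^[0] p) = (a, 0) := by
      have hex : ∃ m, p m = 2 := ⟨1, rfl⟩
      have hfind : Nat.find hex = 1 := by
        rw [Nat.find_eq_iff]
        exact ⟨rfl, fun m hm => by interval_cases m <;> decide⟩
      rw [Function.iterate_zero_apply, Phi, dif_pos hex]
      simp only [hfind]
      rw [if_pos (by omega)]
    have e1 : Phi lam (useq x) (vseq x h) (a, 0) (0, 0) (shiftMap^[1] p) = (a, 0) := by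
      have hex : ∃ m, shiftMap^[1] p m = 2 := ⟨0, rfl⟩
      have hfind : Nat.find hex = 0 := Nat.find_eq_zero hex |>.mpr rfl
      rw [Phi, dif_pos hex]
      simp only [hfind]
      rw [if_pos (by omega)]
    rw [Finset.sum_range_succ, Finset.sum_range_one, e0, e1]
    norm_num [Prod.ext_iff, smul_eq_mul]
    ring
  · rw [integral_pmeasure]
    have e0 : Phi lam (useq x) (vseq x h) (a, 0) (0, 0)
        (shiftMap^[0] (fun _ => (0 : Fin 3))) = (0, 0) := by
      rw [Function.iterate_zero_apply, Phi, dif_neg]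
      rintro ⟨m, hm⟩
      exact absurd hm (by decide)
    rw [Finset.sum_range_one, e0]
    norm_num
end

section
/- Let f be the full shift on X = {0,1,2}^ℕ, Φ the constructed potential, k ∈ ℕ, and p = 1/(k+λ). Suppose μ is an f-invariant Borel probability measure with μ(Φ⁻¹(w₀)) = λp and μ(C_{l+λ}(ξ^l)) = p for l = 1,...,k, where C_{l+λ}(ξ^l) is the cylinder of length l+λ generated by ξ^l = O(1^{l+λ−1}2). Then μ = μ_{ξ^k}, the periodic point measure on the orbit of ξ^k. -/
open scoped Classical ENNReal NNReal

open MeasureTheory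

/-! Write `n = k + λ`, `ξ = ξ^k` and `C` for the cylinder of length `n` around `ξ`. The word
`1^{n-1}2` is unbordered, so its occurrences in a sequence never overlap: the sets `f^{-i} C`,
`i < n`, are pairwise disjoint, and since each has mass `1/n` their union has full measure. By
invariance, almost every `η` then has an occurrence of the word starting in every window of length
`n`, which forces `f^i η = ξ` for some `i < n`. So `f^n` sends almost every point into the orbit of
`ξ`, and averaging `μ s = μ (f^{-(n+j)} s)` over `j < n` gives `μ = μ_ξ`. -/

open Function Finset PiNat

theorem Function.Periodic.sum_range_add {M : Type*} [AddCommMonoid M] {g : ℕ → M} {n : ℕ}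
    (hg : Periodic g n) (r : ℕ) : ∑ j ∈ range n, g (j + r) = ∑ j ∈ range n, g j := by
  simp_rw [add_comm _ r]
  rw [← Nat.add_sub_cancel_left (n := r) (m := n), ← sum_Ico_eq_sum_range,
    Nat.add_sub_cancel_left, ← Nat.image_Ico_mod r n, sum_image (Nat.mod_injOn_Ico r n)]
  exact sum_congr rfl fun j _ => (hg.map_mod_nat j).symm

namespace MeasureTheory.MeasurePreserving

variable {X : Type*} [MeasurableSpace X] {μ : Measure X} {f : X → X}

theorem ae_forall_iterate (hf : MeasurePreserving f μ μ) {p : X → Prop} (hp : ∀ᵐ x ∂μ, p x) :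
    ∀ᵐ x ∂μ, ∀ m, p (f^[m] x) :=
  ae_all_iff.2 fun m => (hf.iterate m).quasiMeasurePreserving.ae hp

theorem ae_exists_iterate_mem [IsProbabilityMeasure μ] (hf : MeasurePreserving f μ μ)
    {s : Set X} (hs : MeasurableSet s) {n : ℕ}
    (hd : (range n : Set ℕ).PairwiseDisjoint fun i => f^[i] ⁻¹' s) (hμs : μ s = (n : ℝ≥0∞)⁻¹) :
    ∀ᵐ x ∂μ, ∃ i < n, f^[i] x ∈ s := by
  have hn : (n : ℝ≥0∞) ≠ 0 := by
    rintro hn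
    simp [hn, measure_ne_top] at hμs
  have hmeas : ∀ i, MeasurableSet (f^[i] ⁻¹' s) := fun i => hf.measurable.iterate i hs
  have hunion : μ (⋃ i ∈ range n, f^[i] ⁻¹' s) = μ Set.univ := by
    rw [measure_biUnion_finset hd fun i _ => hmeas i, measure_univ]
    simp only [(hf.iterate _).measure_preimage hs.nullMeasurableSet, hμs, sum_const, card_range,
      nsmul_eq_mul]
    exact ENNReal.mul_inv_cancel hn (ENNReal.natCast_ne_top n)
  filter_upwards [(ae_mem_iff_measure_eq
    (MeasurableSet.biUnion (range n).countable_toSet fun i _ => hmeas i).nullMeasurableSet).2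
      hunion] with x hx
  simpa using hx

theorem eq_smul_sum_dirac_of_ae_iterate_eq [IsProbabilityMeasure μ]
    (hf : MeasurePreserving f μ μ) {x : X} {n N : ℕ} (hn : n ≠ 0) (hx : IsPeriodicPt f n x)
    (hae : ∀ᵐ y ∂μ, ∃ r, f^[N] y = f^[r] x) :
    μ = (n : ℝ≥0∞)⁻¹ • ∑ i ∈ range n, Measure.dirac (f^[i] x) := by
  ext s hs
  set g : X → ℝ≥0∞ := s.indicator 1
  have hg : Measurable g := measurable_one.indicator hs
  have horbit : ∀ᵐ y ∂μ, ∑ j ∈ range n, g (f^[j] (f^[N] y)) = ∑ j ∈ range n, g (f^[j] x) := by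
    filter_upwards [hae] with y ⟨r, hr⟩
    simp only [hr, ← iterate_add_apply]
    refine Periodic.sum_range_add (g := fun j => g (f^[j] x)) (fun j => ?_) r
    simp only [iterate_add_apply, hx.eq]
  -- `μ s = μ (f^{-(N+j)} s)` for every `j`, and summed over `j < n` the integrand is a.e. constant.
  have hsum : n * μ s = ∑ j ∈ range n, g (f^[j] x) := calc
    n * μ s = ∑ j ∈ range n, ∫⁻ y, g (f^[j] (f^[N] y)) ∂μ := by
      simp only [← comp_apply (f := f^[_]), ← iterate_add]
      simp [(hf.iterate _).lintegral_comp hg, lintegral_indicator_one hs, g]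
    _ = ∫⁻ y, ∑ j ∈ range n, g (f^[j] (f^[N] y)) ∂μ :=
      (lintegral_finsetSum _ fun j _ => hg.comp ((hf.measurable.iterate j).comp
        (hf.measurable.iterate N))).symm
    _ = ∑ j ∈ range n, g (f^[j] x) := by simp [lintegral_congr_ae horbit]
  simp only [Measure.smul_apply, Measure.coe_finsetSum, Finset.sum_apply,
    Measure.dirac_apply' _ hs, smul_eq_mul]
  rw [← hsum, ← mul_assoc,
    ENNReal.inv_mul_cancel (by exact_mod_cast hn) (ENNReal.natCast_ne_top n), one_mul]

end MeasureTheory.MeasurePreserving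

theorem PiNat.measurableSet_cylinder {E : ℕ → Type*} [∀ i, MeasurableSpace (E i)]
    [∀ i, MeasurableSingletonClass (E i)] (x : ∀ i, E i) (n : ℕ) :
    MeasurableSet (cylinder x n) :=
  MeasurableSet.pi (Set.to_countable _) fun i _ => measurableSet_singleton (x i)

/-- `w₀ ⋯ w_{n-1}` has no period `d < n`; equivalently, no proper nonempty prefix of it is also a
suffix. -/
def IsUnbordered {α : Type*} (w : ℕ → α) (n : ℕ) : Prop :=
  ∀ d, 0 < d → d < n → ∃ t, t + d < n ∧ w (t + d) ≠ w t

theorem iterate_shiftMap_apply (i : ℕ) (η : ℕ → Fin 3) (t : ℕ) :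
    shiftMap^[i] η t = η (t + i) := by
  induction i generalizing η with
  | zero => rfl
  | succ i ih => rw [iterate_succ_apply, ih]; rfl

theorem iterate_shiftMap_mem_cylinder_iff {ξ η : ℕ → Fin 3} {i n : ℕ} :
    shiftMap^[i] η ∈ cylinder ξ n ↔ ∀ t < n, η (t + i) = ξ t := by
  simp only [mem_cylinder_iff, iterate_shiftMap_apply]

theorem isPeriodicPt_shiftMap {ξ : ℕ → Fin 3} {n : ℕ} (hξ : Periodic ξ n) :
    IsPeriodicPt shiftMap n ξ :=
  funext fun t => by rw [iterate_shiftMap_apply, hξ]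

section Unbordered

variable {ξ : ℕ → Fin 3} {n : ℕ}

theorem IsUnbordered.eq_of_iterate_mem_cylinder (hξ : IsUnbordered ξ n) {η : ℕ → Fin 3}
    {i j : ℕ} (hi : shiftMap^[i] η ∈ cylinder ξ n) (hj : shiftMap^[j] η ∈ cylinder ξ n)
    (hij : i ≤ j) (hji : j < i + n) : i = j := by
  by_contra hne
  obtain ⟨t, ht, hξt⟩ := hξ (j - i) (by omega) (by omega)
  rw [iterate_shiftMap_mem_cylinder_iff] at hi hj
  refine hξt ?_
  rw [← hi _ ht, ← hj t (by omega)]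
  congr 1
  omega

theorem IsUnbordered.pairwiseDisjoint_preimage_iterate (hξ : IsUnbordered ξ n) :
    (range n : Set ℕ).PairwiseDisjoint fun i => shiftMap^[i] ⁻¹' cylinder ξ n := by
  intro i hi j hj hne
  simp only [coe_range, Set.mem_Iio] at hi hj
  refine Set.disjoint_left.2 fun η hηi hηj => hne ?_
  rcases le_total i j with hij | hji
  · exact hξ.eq_of_iterate_mem_cylinder hηi hηj hij (by omega)
  · exact (hξ.eq_of_iterate_mem_cylinder hηj hηi hji (by omega)).symm

/-- Consecutive occurrences of `ξ₀ ⋯ ξ_{n-1}` in `η` are exactly `n` apart, so they tile `η`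
from the first one on. -/
theorem IsUnbordered.exists_iterate_eq (hξ : IsUnbordered ξ n) (hper : Periodic ξ n)
    {η : ℕ → Fin 3} (hη : ∀ m, ∃ j < n, shiftMap^[j] (shiftMap^[m] η) ∈ cylinder ξ n) :
    ∃ i < n, shiftMap^[i] η = ξ := by
  simp only [← iterate_add_apply] at hη
  obtain ⟨i, hi, hi0⟩ := hη 0
  have tile : ∀ s, shiftMap^[i + s * n] η ∈ cylinder ξ n := by
    intro s
    induction s with
    | zero => simpa using hi0
    | succ s ih =>
      obtain ⟨j, hj, hjs⟩ := hη (i + s * n + 1)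
      have hnext : j + (i + s * n + 1) = i + (s + 1) * n := by
        by_contra hne
        rw [add_mul, one_mul] at hne
        have := hξ.eq_of_iterate_mem_cylinder ih hjs (by omega) (by omega)
        omega
      rwa [hnext] at hjs
  refine ⟨i, hi, funext fun t => ?_⟩
  have hblock :=
    iterate_shiftMap_mem_cylinder_iff.1 (tile (t / n)) (t % n) (Nat.mod_lt _ (by omega))
  rw [iterate_shiftMap_apply, ← hper.map_mod_nat t, ← hblock]
  have hdiv := Nat.mod_add_div' t n
  congr 1
  omega

end Unbordered

theorem xiseq_periodic (lam k : ℕ) : Periodic (xiseq lam k) (k + lam) := fun t => by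
  simp only [xiseq, Nat.add_mod_right]

theorem xiseq_isUnbordered (lam k : ℕ) : IsUnbordered (xiseq lam k) (k + lam) := by
  intro d hd hdn
  refine ⟨k + lam - 1 - d, by omega, ?_⟩
  rw [show k + lam - 1 - d + d = k + lam - 1 by omega]
  simp [xiseq, Nat.mod_eq_of_lt (show k + lam - 1 < k + lam by omega),
    Nat.mod_eq_of_lt (show k + lam - 1 - d < k + lam by omega),
    show k + lam - 1 - d ≠ k + lam - 1 by omega]

theorem stmt_17_general (lam : ℕ) (k : ℕ) (hk : 1 ≤ k)
    (μ : Measure (ℕ → Fin 3)) (hprob : IsProbabilityMeasure μ)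
    (hinv : MeasurePreserving shiftMap μ μ)
    (hcyl : ∀ l, 1 ≤ l → l ≤ k →
      μ {η | ∀ i < l + lam, η i = xiseq lam l i} = (((k + lam : ℕ) : ℝ≥0∞))⁻¹) :
    μ = pmeasure (k + lam) (xiseq lam k) := by
  have hunb := xiseq_isUnbordered lam k
  have hcover : ∀ᵐ η ∂μ, ∃ i < k + lam, shiftMap^[i] η ∈ cylinder (xiseq lam k) (k + lam) :=
    hinv.ae_exists_iterate_mem (measurableSet_cylinder _ _)
      hunb.pairwiseDisjoint_preimage_iterate (hcyl k hk le_rfl)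
  refine hinv.eq_smul_sum_dirac_of_ae_iterate_eq (N := k + lam) (by omega)
    (isPeriodicPt_shiftMap (xiseq_periodic lam k)) ?_
  filter_upwards [hinv.ae_forall_iterate hcover] with η hη
  obtain ⟨i, hi, hiη⟩ := hunb.exists_iterate_eq (xiseq_periodic lam k) hη
  exact ⟨k + lam - i, by rw [← hiη, ← iterate_add_apply, Nat.sub_add_cancel hi.le]⟩

/-- if an invariant probability measure `μ` gives mass `λ/(k+λ)` to
`Φ⁻¹(w₀)` and mass `1/(k+λ)` to each cylinder `C_{l+λ}(ξ^l)`, `l = 1,…,k`, then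
`μ = μ_{ξ^k}`. -/
theorem stmt_17 (a b : ℝ) (ha : 0 < a) (hb : 0 < b) (lam : ℕ) (hlam : 3 ≤ lam)
    (h : ℝ → ℝ) (hmono : StrictMonoOn h (Set.Icc 0 a))
    (hconc : StrictConcaveOn ℝ (Set.Icc 0 a) h)
    (hcont : ContinuousOn h (Set.Icc 0 a)) (h0 : h 0 = 0) (hab : h a = b)
    (θ C : ℝ) (hθ : θ ∈ Set.Ioo (0 : ℝ) 1) (hC : 0 < C)
    (x : ℕ → ℝ) (hx : ∀ k, 1 ≤ k → x k ∈ Set.Ioo 0 a)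
    (hanti : StrictAntiOn x (Set.Ici 1))
    (hnorm : ∀ k, 1 ≤ k → enorm2 (vseq x h k) < C * θ ^ k)
    (k : ℕ) (hk : 1 ≤ k)
    (μ : Measure (ℕ → Fin 3)) (hprob : IsProbabilityMeasure μ)
    (hinv : MeasurePreserving shiftMap μ μ)
    (hw0 : μ (Phi lam (useq x) (vseq x h) (a, 0) (0, 0) ⁻¹' {((a : ℝ), (0 : ℝ))}) =
      (lam : ℝ≥0∞) * (((k + lam : ℕ) : ℝ≥0∞))⁻¹)
    (hcyl : ∀ l, 1 ≤ l → l ≤ k →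
      μ {η | ∀ i < l + lam, η i = xiseq lam l i} = (((k + lam : ℕ) : ℝ≥0∞))⁻¹) :
    μ = pmeasure (k + lam) (xiseq lam k) :=
  stmt_17_general lam k hk μ hprob hinv hcyl
end
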